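/- (Proposition 2(A)) Consider a population in which all voters are weak LD voters with the same uncertainty level r ≥ 0, and a sequence a^0, a^1, …, a^T of action profiles in which every consecutive pair is a valid step and a^0 is the truthful profile. Then the set of possible winners shrinks over time: W^{t+1} ⊆ W^t for all t < T, where W^t = W_r(s_{a^t}). -/
import Mathlib


/-- The multiplicative distance between two (positive) score vectors. -/
noncomputable def multDist {M : Type*} [Fintype M] [Nonempty M] (s s' : M → ℝ) : ℝ :=
  Finset.univ.sup' Finset.univ_nonempty (fun c => max (s' c / s c) (s c / s' c) - 1)

/-- The uncertainty set `S(s,r)`: candidate-wise multiplicative interval around `s`. -/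
def uncSet {M : Type*} (s : M → ℝ) (r : ℝ) : Set (M → ℝ) :=
  {s' | ∀ c, s c / (1 + r) ≤ s' c ∧ s' c ≤ s c * (1 + r)}

/-- The set of possible winners `W_r(s)`. -/
def possWinners {M : Type*} (s : M → ℝ) (r : ℝ) : Set M :=
  {c | ∃ s' ∈ uncSet s r, ∀ a, s' a ≤ s' c}

open Classical in
/-- The perceived outcome `f(s',Q,c)` when voting `c`, under tie-breaker `Q`. -/
noncomputable def outcome {M : Type*} [Fintype M] [Nonempty M]
    (Q : LinearOrder M) (s' : M → ℝ) (c : M) : M :=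
  if ∀ a, s' a ≤ s' c then c
  else
    @Finset.min' M Q (Finset.univ.filter (fun x => ∀ a, s' a ≤ s' x))
      (by
        obtain ⟨b, _, hb⟩ :=
          Finset.exists_max_image (Finset.univ : Finset M) s' Finset.univ_nonempty
        exact ⟨b, Finset.mem_filter.mpr
          ⟨Finset.mem_univ b, fun a => hb a (Finset.mem_univ a)⟩⟩)

/-- `a` `S(s,r)`-beats `b` for a voter with preference order `P`. -/
def beats {M : Type*} [Fintype M] [Nonempty M]
    (P : LinearOrder M) (r : ℝ) (s : M → ℝ) (a b : M) : Prop :=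
  ∃ s' ∈ uncSet s r, ∃ Q : LinearOrder M, P.lt (outcome Q s' b) (outcome Q s' a)

/-- `a` `S(s,r)`-dominates `b`. -/
def dominates {M : Type*} [Fintype M] [Nonempty M]
    (P : LinearOrder M) (r : ℝ) (s : M → ℝ) (a b : M) : Prop :=
  beats P r s a b ∧ ¬ beats P r s b a

/-- `D(s,a)`: candidates that `S(s,r)`-dominate the current vote `a`
and are themselves not `S(s,r)`-dominated. -/
def Dset {M : Type*} [Fintype M] [Nonempty M]
    (P : LinearOrder M) (r : ℝ) (s : M → ℝ) (a : M) : Set M :=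
  {c | dominates P r s c a ∧ ∀ d, ¬ dominates P r s d c}

open Classical in
/-- The response set `g(a,s)` of a weak LD voter. -/
noncomputable def responseSet {M : Type*} [Fintype M] [Nonempty M]
    (P : LinearOrder M) (r : ℝ) (s : M → ℝ) (a : M) : Set M :=
  if Dset P r s a = ∅ then {a} else Dset P r s a

/-- `u` is a cardinal utility scale fitting the preference order `P`. -/
def fits {M : Type*} (P : LinearOrder M) (u : M → ℝ) : Prop :=
  ∀ a b, P.lt b a → u b < u a

/-- The regret for voting `b` under score vector `s'` and tie-breaker `Q`. -/
noncomputable def regret {M : Type*} [Fintype M] [Nonempty M]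
    (u : M → ℝ) (Q : LinearOrder M) (s' : M → ℝ) (b : M) : ℝ :=
  Finset.univ.sup' Finset.univ_nonempty (fun c => u (outcome Q s' c)) - u (outcome Q s' b)

/-- The worst-case regret `WCR_r(s,b)`. -/
noncomputable def WCR {M : Type*} [Fintype M] [Nonempty M]
    (u : M → ℝ) (r : ℝ) (s : M → ℝ) (b : M) : ℝ :=
  sSup {x | ∃ s' ∈ uncSet s r, ∃ Q : LinearOrder M, x = regret u Q s' b}

open Classical in
/-- The score vector of an action profile (unit-weight voters). -/
noncomputable def score {M : Type*} {I : Type*} [Fintype I] (a : I → M) (c : M) : ℝ :=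
  ((Finset.univ.filter (fun i => a i = c)).card : ℝ)

open Classical in
/-- The score vector of an action profile with voter weights `w`. -/
noncomputable def wscore {M : Type*} {I : Type*} [Fintype I]
    (w : I → ℝ) (a : I → M) (c : M) : ℝ :=
  ∑ i ∈ Finset.univ.filter (fun i => a i = c), w i

/-- A valid step of the weak LD dynamics: every voter either keeps her vote
or makes a weak LD move. -/
def validStep {M : Type*} [Fintype M] [Nonempty M] {I : Type*} [Fintype I]
    (P : I → LinearOrder M) (r : I → ℝ) (a a'' : I → M) : Prop :=
  ∀ i, a'' i = a i ∨ (a'' i ∈ Dset (P i) (r i) (score a) (a i) ∧ a'' i ≠ a i)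

/-- The truthful profile: every voter votes for her most preferred candidate. -/
def truthful {M : Type*} {I : Type*} (P : I → LinearOrder M) (a : I → M) : Prop :=
  ∀ i c, (P i).le c (a i)


/-! ### Auxiliary lemmas for Proposition 2(A) -/

section Aux

set_option linter.unusedSectionVars false

variable {M : Type*} [Fintype M] [Nonempty M]

lemma exists_bottom_order (y : M) : ∃ Q : LinearOrder M, ∀ x, Q.le y x := by
  classical
  let g : M → ℕ := fun x => if x = y then 0 else (Fintype.equivFin M x).val + 1
  have hg : Function.Injective g := by
    intro u v huv
    by_cases hu : u = y <;> by_cases hv : v = y <;> simp [g, hu, hv] at huv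
    · exact hu.trans hv.symm
    · exact (Fintype.equivFin M).injective (Fin.val_injective huv)
  refine ⟨LinearOrder.lift' g hg, fun x => ?_⟩
  show g y ≤ g x
  simp [g]

lemma min'_eq_bottom {Q : LinearOrder M} {y : M} (hQ : ∀ x, Q.le y x)
    (T : Finset M) (hT : T.Nonempty) (hy : y ∈ T) :
    @Finset.min' M Q T hT = y := by
  letI := Q
  exact le_antisymm (Finset.min'_le T y hy) (Finset.le_min' _ _ _ fun x _ => hQ x)

lemma mem_of_min' {Q : LinearOrder M} {p : M → Prop} [DecidablePred p]
    (hne : (Finset.univ.filter p).Nonempty) :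
    p (@Finset.min' M Q (Finset.univ.filter p) hne) := by
  have := @Finset.min'_mem M Q (Finset.univ.filter p) hne
  simp only [Finset.mem_filter] at this
  exact this.2

lemma self_mem_uncSet {s : M → ℝ} (hs : ∀ c, 0 ≤ s c) {r : ℝ} (hr : 0 ≤ r) :
    s ∈ uncSet s r := by
  intro c
  constructor
  · apply div_le_self (hs c); linarith
  · nlinarith [hs c]

lemma pair_max {s : M → ℝ} (hs : ∀ c, 0 ≤ s c) {r : ℝ} (hr : 0 ≤ r) {b c : M}
    (hb : ∀ x, s x ≤ (1+r)^2 * s b) (hc : ∀ x, s x ≤ (1+r)^2 * s c) :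
    ∃ s' ∈ uncSet s r, (∀ x, s' x ≤ s' b) ∧ (∀ x, s' x ≤ s' c) := by
  have h1 : (0:ℝ) < 1 + r := by linarith
  set v := (1+r) * min (s b) (s c) with hv
  refine ⟨fun x => min v ((1+r) * s x), fun x => ⟨?_, ?_⟩, ?_, ?_⟩
  · apply le_min
    · rw [div_le_iff₀ h1]
      rcases le_total (s b) (s c) with h | h
      · rw [hv, min_eq_left h]; nlinarith [hb x]
      · rw [hv, min_eq_right h]; nlinarith [hc x]
    · rw [div_le_iff₀ h1]
      nlinarith [mul_nonneg (hs x) hr, mul_nonneg (mul_nonneg (hs x) hr) hr]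
  · calc min v ((1+r) * s x) ≤ (1+r) * s x := min_le_right _ _
      _ = s x * (1+r) := mul_comm _ _
  · have hvb : v ≤ (1+r) * s b :=
      mul_le_mul_of_nonneg_left (min_le_left _ _) (le_of_lt h1)
    intro x
    simp only []
    rw [min_eq_left hvb]
    exact min_le_left _ _
  · have hvc : v ≤ (1+r) * s c :=
      mul_le_mul_of_nonneg_left (min_le_right _ _) (le_of_lt h1)
    intro x
    simp only []
    rw [min_eq_left hvc]
    exact min_le_left _ _

lemma possWinners_iff {s : M → ℝ} (hs : ∀ c, 0 ≤ s c) {r : ℝ} (hr : 0 ≤ r) {c : M} :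
    c ∈ possWinners s r ↔ ∀ x, s x ≤ (1+r)^2 * s c := by
  have h1 : (0:ℝ) < 1 + r := by linarith
  constructor
  · rintro ⟨s', hs', hmax⟩ x
    have ha := (hs' x).1
    have hb := (hs' c).2
    have hx := hmax x
    rw [div_le_iff₀ h1] at ha
    nlinarith
  · intro h
    obtain ⟨s', h1, h2, _⟩ := pair_max hs hr h h
    exact ⟨s', h1, h2⟩

lemma outcome_eq_self (Q : LinearOrder M) (s' : M → ℝ) {c : M} (h : ∀ a, s' a ≤ s' c) :
    outcome Q s' c = c := by
  rw [outcome, if_pos h]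

lemma outcome_max (Q : LinearOrder M) (s' : M → ℝ) (c : M) :
    ∀ a, s' a ≤ s' (outcome Q s' c) := by
  rw [outcome]
  split_ifs with h
  · exact h
  · classical
    exact mem_of_min' (Q := Q) (p := fun x => ∀ a, s' a ≤ s' x) _

lemma outcome_mem_possWinners {s : M → ℝ} {r : ℝ} {s' : M → ℝ} (hs' : s' ∈ uncSet s r)
    (Q : LinearOrder M) (c : M) : outcome Q s' c ∈ possWinners s r :=
  ⟨s', hs', outcome_max Q s' c⟩

lemma outcome_eq_bottom {s' : M → ℝ} {c y : M} (hy : ∀ a, s' a ≤ s' y)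
    (hc : ¬ ∀ a, s' a ≤ s' c) :
    ∃ Q : LinearOrder M, outcome Q s' c = y := by
  obtain ⟨Q, hQ⟩ := exists_bottom_order y
  refine ⟨Q, ?_⟩
  rw [outcome, if_neg hc]
  apply min'_eq_bottom hQ
  simp only [Finset.mem_filter]
  exact ⟨Finset.mem_univ y, hy⟩

lemma beats_of_max_max {P : LinearOrder M} {r : ℝ} {s s' : M → ℝ} (hs' : s' ∈ uncSet s r)
    {a b : M} (ha : ∀ x, s' x ≤ s' a) (hb : ∀ x, s' x ≤ s' b) (h : P.lt b a) :
    beats P r s a b := by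
  obtain ⟨Q, _⟩ := exists_bottom_order (Classical.arbitrary M)
  exact ⟨s', hs', Q, by rwa [outcome_eq_self Q s' ha, outcome_eq_self Q s' hb]⟩

lemma beats_of_max_not {P : LinearOrder M} {r : ℝ} {s s' : M → ℝ} (hs' : s' ∈ uncSet s r)
    {a b y : M} (ha : ∀ x, s' x ≤ s' a) (hb : ¬ ∀ x, s' x ≤ s' b)
    (hy : ∀ x, s' x ≤ s' y) (h : P.lt y a) :
    beats P r s a b := by
  obtain ⟨Q, hQ⟩ := outcome_eq_bottom hy hb
  exact ⟨s', hs', Q, by rwa [outcome_eq_self Q s' ha, hQ]⟩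

lemma beats_of_not_max {P : LinearOrder M} {r : ℝ} {s s' : M → ℝ} (hs' : s' ∈ uncSet s r)
    {a b y : M} (ha : ¬ ∀ x, s' x ≤ s' a) (hb : ∀ x, s' x ≤ s' b)
    (hy : ∀ x, s' x ≤ s' y) (h : P.lt b y) :
    beats P r s a b := by
  obtain ⟨Q, hQ⟩ := outcome_eq_bottom hy ha
  exact ⟨s', hs', Q, by rwa [outcome_eq_self Q s' hb, hQ]⟩

lemma not_beats_top {P : LinearOrder M} {s : M → ℝ} {r : ℝ} {c x : M}
    (hc : c ∉ possWinners s r) (hx : ∀ w ∈ possWinners s r, P.le w x) :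
    ¬ beats P r s c x := by
  rintro ⟨s', hs', Q, hlt⟩
  letI := P
  have hcnot : ¬ ∀ a, s' a ≤ s' c := fun h => hc ⟨s', hs', h⟩
  have hco : outcome Q s' c ∈ possWinners s r := outcome_mem_possWinners hs' Q c
  by_cases hxm : ∀ a, s' a ≤ s' x
  · rw [outcome_eq_self Q s' hxm] at hlt
    exact absurd (hx _ hco) (not_le_of_gt hlt)
  · have heq : outcome Q s' x = outcome Q s' c := by
      rw [outcome, outcome, if_neg hxm, if_neg hcnot]
    rw [heq] at hlt
    exact lt_irrefl _ hlt

lemma Dset_mem_possWinners {P : LinearOrder M} {r : ℝ} {s : M → ℝ} (hs : ∀ c, 0 ≤ s c)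
    (hr : 0 ≤ r) {b c : M} (hc : c ∈ Dset P r s b) : c ∈ possWinners s r := by
  classical
  by_contra hcW
  obtain ⟨⟨hbeat, _⟩, hundom⟩ := hc
  letI := P
  have hWne : (Finset.univ.filter (· ∈ possWinners s r)).Nonempty := by
    obtain ⟨m, _, hm⟩ := Finset.exists_max_image Finset.univ s Finset.univ_nonempty
    refine ⟨m, Finset.mem_filter.mpr ⟨Finset.mem_univ m, ?_⟩⟩
    rw [possWinners_iff hs hr]
    intro x
    nlinarith [hm x (Finset.mem_univ x), hs m, mul_nonneg (hs m) hr,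
      mul_nonneg (mul_nonneg (hs m) hr) hr]
  set Wf := Finset.univ.filter (· ∈ possWinners s r) with hWf
  set xs := Wf.max' hWne with hxs
  have hxsW : xs ∈ possWinners s r := by
    have h := Wf.max'_mem hWne
    exact (Finset.mem_filter.mp h).2
  have hxtop : ∀ w ∈ possWinners s r, P.le w xs := fun w hw =>
    Wf.le_max' w (Finset.mem_filter.mpr ⟨Finset.mem_univ w, hw⟩)
  obtain ⟨s', hs', Q, hlt⟩ := hbeat
  have hz : outcome Q s' b ∈ possWinners s r := outcome_mem_possWinners hs' Q b
  have hy : outcome Q s' c ∈ possWinners s r := outcome_mem_possWinners hs' Q c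
  have hzxs : P.lt (outcome Q s' b) xs :=
    @lt_of_lt_of_le M P.toPartialOrder.toPreorder _ _ _ hlt (hxtop _ hy)
  obtain ⟨s'', hs'', hmx, hmz⟩ :=
    pair_max hs hr ((possWinners_iff hs hr).mp hxsW) ((possWinners_iff hs hr).mp hz)
  have hcm : ¬ ∀ x, s'' x ≤ s'' c := fun h => hcW ⟨s'', hs'', h⟩
  exact hundom xs ⟨beats_of_max_not hs'' hmx hcm hmz hzxs, not_beats_top hcW hxtop⟩

lemma Dset_top {P : LinearOrder M} {r : ℝ} {s : M → ℝ} (hs : ∀ c, 0 ≤ s c) (hr : 0 ≤ r)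
    {b c : M} (hb : b ∉ possWinners s r) (hc : c ∈ Dset P r s b) :
    ∀ d ∈ possWinners s r, P.le d c := by
  letI := P
  intro d hd
  by_contra hnle
  have hcd : P.lt c d := not_le.mp hnle
  have hcW := Dset_mem_possWinners hs hr hc
  obtain ⟨s', hs', hmc, hmd⟩ :=
    pair_max hs hr ((possWinners_iff hs hr).mp hcW) ((possWinners_iff hs hr).mp hd)
  have hbm : ¬ ∀ x, s' x ≤ s' b := fun h => hb ⟨s', hs', h⟩
  exact hc.1.2 (beats_of_not_max hs' hbm hmc hmd hcd)

lemma move_classify {P : LinearOrder M} {r : ℝ} {s : M → ℝ} (hs : ∀ c, 0 ≤ s c) (hr : 0 ≤ r)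
    {b c : M} (hinv : ∀ w ∈ possWinners s r, P.le w b)
    (hc : c ∈ Dset P r s b) (hne : c ≠ b) :
    b ∉ possWinners s r ∧ c ∈ possWinners s r ∧ ∀ w ∈ possWinners s r, P.le w c := by
  letI := P
  have hcW := Dset_mem_possWinners hs hr hc
  have hbW : b ∉ possWinners s r := by
    intro hbW
    have hlt : P.lt c b := lt_of_le_of_ne (hinv c hcW) hne
    obtain ⟨s', hs', hmb, hmc⟩ :=
      pair_max hs hr ((possWinners_iff hs hr).mp hbW) ((possWinners_iff hs hr).mp hcW)
    exact hc.1.2 (beats_of_max_max hs' hmb hmc hlt)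
  exact ⟨hbW, hcW, Dset_top hs hr hbW hc⟩

lemma score_le_score {I : Type*} [Fintype I] {a a'' : I → M} {c : M}
    (h : ∀ i, a i = c → a'' i = c) : score a c ≤ score a'' c := by
  classical
  unfold score
  have : (Finset.univ.filter (fun i => a i = c)) ⊆ (Finset.univ.filter (fun i => a'' i = c)) := by
    intro i hi
    simp only [Finset.mem_filter, Finset.mem_univ, true_and] at hi ⊢
    exact h i hi
  exact_mod_cast Finset.card_le_card this

lemma step_shrink {I : Type*} [Fintype I] (P : I → LinearOrder M) {r : ℝ} (hr : 0 ≤ r)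
    {a a'' : I → M} (hstep : validStep P (fun _ => r) a a'')
    (hinv : ∀ i, ∀ w ∈ possWinners (score a) r, (P i).le w (a i)) :
    possWinners (score a'') r ⊆ possWinners (score a) r ∧
    ∀ i, ∀ w ∈ possWinners (score a'') r, (P i).le w (a'' i) := by
  classical
  have hs : ∀ c, 0 ≤ score a c := fun c => Nat.cast_nonneg _
  have hs'' : ∀ c, 0 ≤ score a'' c := fun c => Nat.cast_nonneg _
  have hclass : ∀ i, a'' i = a i ∨ (a i ∉ possWinners (score a) r ∧
      a'' i ∈ possWinners (score a) r ∧
      ∀ w ∈ possWinners (score a) r, (P i).le w (a'' i)) := by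
    intro i
    rcases hstep i with h | ⟨hD, hne⟩
    · exact Or.inl h
    · exact Or.inr (move_classify hs hr (hinv i) hD hne)
  have hlow : ∀ c, c ∉ possWinners (score a) r → score a'' c ≤ score a c := by
    intro c hcW
    apply score_le_score
    intro i hi
    rcases hclass i with h | ⟨_, hW, _⟩
    · rw [← h]; exact hi
    · rw [hi] at hW; exact absurd hW hcW
  have hhigh : ∀ c, c ∈ possWinners (score a) r → score a c ≤ score a'' c := by
    intro c hcW
    apply score_le_score
    intro i hi
    rcases hclass i with h | ⟨hnW, _, _⟩
    · rw [h, hi]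
    · rw [hi] at hnW; exact absurd hcW hnW
  have hsub : possWinners (score a'') r ⊆ possWinners (score a) r := by
    intro c hc
    rw [possWinners_iff hs hr]
    by_contra hcf
    push_neg at hcf
    obtain ⟨x, hx⟩ := hcf
    have hcW : c ∉ possWinners (score a) r := by
      rw [possWinners_iff hs hr]
      push_neg
      exact ⟨x, hx⟩
    have h1 : score a'' c ≤ score a c := hlow c hcW
    obtain ⟨m, _, hm⟩ := Finset.exists_max_image Finset.univ (score a) Finset.univ_nonempty
    have hmW : m ∈ possWinners (score a) r := by
      rw [possWinners_iff hs hr]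
      intro y
      nlinarith [hm y (Finset.mem_univ y), hs m, mul_nonneg (hs m) hr,
        mul_nonneg (mul_nonneg (hs m) hr) hr]
    have h2 : score a m ≤ score a'' m := hhigh m hmW
    have h3 := (possWinners_iff hs'' hr).mp hc m
    have h4 := hm x (Finset.mem_univ x)
    nlinarith [mul_le_mul_of_nonneg_left h1 (sq_nonneg (1+r))]
  refine ⟨hsub, fun i w hw => ?_⟩
  rcases hclass i with h | ⟨_, _, htop⟩
  · rw [h]; exact hinv i w (hsub hw)
  · exact htop w (hsub hw)

end Aux

/-- Proposition 2(A): with a uniform uncertainty level and a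
truthful initial profile, the set of possible winners shrinks over time. -/
theorem possWinners_shrink {M : Type*} [Fintype M] [Nonempty M]
    {I : Type*} [Fintype I]
    (P : I → LinearOrder M) (r : ℝ) (hr : 0 ≤ r)
    (T : ℕ) (a : ℕ → I → M)
    (hsteps : ∀ t < T, validStep P (fun _ => r) (a t) (a (t + 1)))
    (htruth : truthful P (a 0)) :
    ∀ t < T, possWinners (score (a (t + 1))) r ⊆ possWinners (score (a t)) r := by
  classical
  have key : ∀ t, t ≤ T → ∀ i, ∀ w ∈ possWinners (score (a t)) r, (P i).le w (a t i) := by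
    intro t
    induction t with
    | zero => exact fun _ i w _ => htruth i w
    | succ t ih =>
      intro ht i w hw
      have ht' : t < T := lt_of_lt_of_le (Nat.lt_succ_self t) ht
      exact (step_shrink P hr (hsteps t ht') (ih (le_of_lt ht'))).2 i w hw
  intro t ht
  exact (step_shrink P hr (hsteps t ht) (key t (le_of_lt ht))).1
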